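/- Let K be a field, L₀, L₁, …, Lₙ subrings of K, and set U = ⋂ᵢ Lᵢ and U' = ⋂_{i ≠ k} Lᵢ for some fixed k ≥ 1. Suppose x ∈ U is a unit in each Lᵢ, and suppose that for every v ∈ U' there exists d ∈ ℕ such that v·x^d ∈ L_k. Then U' = U[x⁻¹], where U[x⁻¹] denotes the subring of K generated by U and x⁻¹. -/

import Mathlib

/-!
Every `v ∈ U'` is `(v * x ^ d) * (x⁻¹) ^ d` where `v * x ^ d` lies in `L k` by hypothesis
and in every other `L i` because `v` and `x` do, so `U' ⊆ U[x⁻¹]`; conversely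
`U ⊆ U'` and `x⁻¹ ∈ U'`, so `U[x⁻¹] ⊆ U'`.
-/

namespace Subring

variable {K : Type*} [Field K]

theorem closure_union_inv_le {A B : Subring K} {x : K} (hAB : A ≤ B) (hx : x⁻¹ ∈ B) :
    closure ((A : Set K) ∪ {x⁻¹}) ≤ B :=
  closure_le.2 <| Set.union_subset hAB (Set.singleton_subset_iff.2 hx)

theorem mem_closure_union_inv_of_mul_pow_mem {A : Subring K} {x v : K} (hx : x ≠ 0) {d : ℕ}
    (hv : v * x ^ d ∈ A) : v ∈ closure ((A : Set K) ∪ {x⁻¹}) := by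
  have hv_eq : v = v * x ^ d * x⁻¹ ^ d := by
    rw [mul_assoc, ← mul_pow, mul_inv_cancel₀ hx, one_pow, mul_one]
  have hA : A ≤ closure ((A : Set K) ∪ {x⁻¹}) := fun _ h => subset_closure (Or.inl h)
  have hinv : x⁻¹ ∈ closure ((A : Set K) ∪ {x⁻¹}) := subset_closure (Or.inr rfl)
  rw [hv_eq]
  exact mul_mem (hA hv) (pow_mem hinv d)

theorem eq_closure_union_inv {A B : Subring K} {x : K} (hx : x ≠ 0) (hAB : A ≤ B)
    (hxB : x⁻¹ ∈ B) (hB : ∀ v ∈ B, ∃ d : ℕ, v * x ^ d ∈ A) :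
    B = closure ((A : Set K) ∪ {x⁻¹}) := by
  refine le_antisymm (fun v hv => ?_) (closure_union_inv_le hAB hxB)
  obtain ⟨d, hd⟩ := hB v hv
  exact mem_closure_union_inv_of_mul_pow_mem hx hd

end Subring

theorem starfish_localization_general {K : Type*} [Field K] {n : ℕ} (L : Fin (n + 1) → Subring K)
    (k : Fin (n + 1))
    (U : Subring K) (hU : U = ⨅ i, L i)
    (U' : Subring K) (hU' : U' = ⨅ i ∈ {i | i ≠ k}, L i)
    (x : K) (hxU : x ∈ U) (hx0 : x ≠ 0) (hxunit : ∀ i, x⁻¹ ∈ L i)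
    (happrox : ∀ v ∈ U', ∃ d : ℕ, v * x ^ d ∈ L k) :
    (U' : Set K) = (Subring.closure ((U : Set K) ∪ {x⁻¹}) : Set K) := by
  have mem_U : ∀ y, y ∈ U ↔ ∀ i, y ∈ L i := by
    simp [hU, Subring.mem_iInf]
  have mem_U' : ∀ y, y ∈ U' ↔ ∀ i, i ≠ k → y ∈ L i := by
    simp [hU', Subring.mem_iInf]
  refine congrArg SetLike.coe (Subring.eq_closure_union_inv hx0 ?_ ?_ fun v hv => ?_)
  · exact fun y hy => (mem_U' y).2 fun i _ => (mem_U y).1 hy i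
  · exact (mem_U' x⁻¹).2 fun i _ => hxunit i
  · obtain ⟨d, hd⟩ := happrox v hv
    refine ⟨d, (mem_U _).2 fun i => ?_⟩
    by_cases hik : i = k
    · exact hik ▸ hd
    · exact mul_mem ((mem_U' v).1 hv i hik) (pow_mem ((mem_U x).1 hxU i) d)

/-- Let `K` be a field, `L₀, …, Lₙ` subrings of `K`, `U = ⋂ᵢ Lᵢ` and
`U' = ⋂_{i ≠ k} Lᵢ` for a fixed `k ≥ 1`. Suppose `x ∈ U` is a unit in each `Lᵢ` and
that for every `v ∈ U'` there is `d ∈ ℕ` with `v * x ^ d ∈ L_k`. Then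
`U' = U[x⁻¹]`, the subring of `K` generated by `U` and `x⁻¹`. -/
theorem starfish_localization {K : Type*} [Field K] {n : ℕ} (L : Fin (n + 1) → Subring K)
    (k : Fin (n + 1)) (hk : k ≠ 0)
    (U : Subring K) (hU : U = ⨅ i, L i)
    (U' : Subring K) (hU' : U' = ⨅ i ∈ {i | i ≠ k}, L i)
    (x : K) (hxU : x ∈ U) (hx0 : x ≠ 0) (hxunit : ∀ i, x⁻¹ ∈ L i)
    (happrox : ∀ v ∈ U', ∃ d : ℕ, v * x ^ d ∈ L k) :
    (U' : Set K) = (Subring.closure ((U : Set K) ∪ {x⁻¹}) : Set K) :=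
  starfish_localization_general L k U hU U' hU' x hxU hx0 hxunit happrox
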